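/- arXiv:2212.08912 — 2 statements merged into one kernel-verified Lean document; each statement's English description precedes it below -/
import Mathlib

section
/- Assume d₁ > 0, d₂ > 0 and s₃ > 0. Then the map X_G : [0,1]² → G', X_G(θ₁, θ₂) = (θ₁·min(d₁, s₃), θ₂·min(d₂, s₃ - θ₁·min(d₁, s₃))), is surjective onto G' = {(f₁, f₂) : 0 ≤ f₁ ≤ d₁, 0 ≤ f₂ ≤ d₂, f₁ + f₂ ≤ s₃}. -/
open Set

theorem XG_surjective (d₁ d₂ s₃ : ℝ) (hd₁ : 0 < d₁) (hd₂ : 0 < d₂) (hs₃ : 0 < s₃) :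
    ∀ f₁ f₂ : ℝ, 0 ≤ f₁ → f₁ ≤ d₁ → 0 ≤ f₂ → f₂ ≤ d₂ → f₁ + f₂ ≤ s₃ →
      ∃ θ₁ ∈ Icc (0 : ℝ) 1, ∃ θ₂ ∈ Icc (0 : ℝ) 1,
        f₁ = θ₁ * min d₁ s₃ ∧ f₂ = θ₂ * min d₂ (s₃ - θ₁ * min d₁ s₃) := by
  intro f₁ f₂ h0₁ h1 h0₂ h2 hsum
  have hm₁ : (0:ℝ) < min d₁ s₃ := lt_min hd₁ hs₃
  have hf₁s : f₁ ≤ s₃ := by linarith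
  refine ⟨f₁ / min d₁ s₃, ⟨div_nonneg h0₁ hm₁.le, by
    rw [div_le_one hm₁]; exact le_min h1 hf₁s⟩, ?_⟩
  have hθ₁ : f₁ / min d₁ s₃ * min d₁ s₃ = f₁ := div_mul_cancel₀ _ hm₁.ne'
  rw [hθ₁]
  set m := min d₂ (s₃ - f₁) with hm
  have hm0 : 0 ≤ m := le_min hd₂.le (by linarith)
  have hf₂m : f₂ ≤ m := le_min h2 (by linarith)
  rcases eq_or_lt_of_le hm0 with h | h
  · exact ⟨0, ⟨le_refl 0, zero_le_one⟩, rfl, by nlinarith⟩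
  · exact ⟨f₂ / m, ⟨div_nonneg h0₂ h.le, by rw [div_le_one h]; exact hf₂m⟩, rfl,
      (div_mul_cancel₀ _ h.ne').symm⟩
end

section
/- (Shock speed sign on the outgoing road) Let f be the Greenshields flux with maximizer σ = ρ_max/2. Suppose ρ₀ ∈ [0, ρ_max], suppose the supply condition 0 ≤ f₀ ≤ s(ρ₀) holds where s(ρ₀) = f(σ) if ρ₀ ≤ σ and s(ρ₀) = f(ρ₀) otherwise, with f₀ ≠ f(ρ₀), and let ρ_L ∈ [0, σ] satisfy f(ρ_L) = f₀. Then (f(ρ₀) - f₀)/(ρ₀ - ρ_L) > 0. -/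
open Set

theorem shock_speed_positive_outgoing (vmax ρmax : ℝ) (hv : 0 < vmax) (hρ : 0 < ρmax)
    (f : ℝ → ℝ) (hf : ∀ ρ, f ρ = vmax * ρ * (1 - ρ / ρmax))
    (σ : ℝ) (hσ : σ = ρmax / 2)
    (ρ₀ : ℝ) (hρ₀ : ρ₀ ∈ Icc 0 ρmax)
    (f₀ : ℝ) (hf₀0 : 0 ≤ f₀) (hf₀s : f₀ ≤ if ρ₀ ≤ σ then f σ else f ρ₀) (hf₀ne : f₀ ≠ f ρ₀)
    (ρL : ℝ) (hρL : ρL ∈ Icc 0 σ) (hfρL : f ρL = f₀) :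
    (f ρ₀ - f₀) / (ρ₀ - ρL) > 0 := by
  obtain ⟨hρL0, hρLσ⟩ := hρL
  obtain ⟨hρ₀0, hρ₀m⟩ := hρ₀
  have hmono : ∀ a b : ℝ, 0 ≤ a → a < b → b ≤ σ → f a < f b := by
    intro a b ha hab hb
    rw [hσ] at hb
    have h1 : 1 - (a + b) / ρmax > 0 := by
      rw [gt_iff_lt, sub_pos, div_lt_one hρ]; linarith
    have key : f b - f a = vmax * (b - a) * (1 - (a + b) / ρmax) := by
      rw [hf, hf]; field_simp; ring
    nlinarith [mul_pos (mul_pos hv (sub_pos.mpr hab)) h1]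
  by_cases hle : ρ₀ ≤ σ
  · rcases lt_trichotomy ρ₀ ρL with h | h | h
    · have := hmono ρ₀ ρL hρ₀0 h hρLσ
      rw [hfρL] at this
      exact div_pos_of_neg_of_neg (by linarith) (by linarith)
    · exact absurd (hfρL ▸ congrArg f h.symm) hf₀ne
    · have := hmono ρL ρ₀ hρL0 h hle
      rw [hfρL] at this
      exact div_pos (by linarith) (by linarith)
  · push_neg at hle
    rw [if_neg (not_le.mpr hle)] at hf₀s
    have hnum : f₀ < f ρ₀ := lt_of_le_of_ne hf₀s hf₀ne
    exact div_pos (by linarith) (by linarith)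
end
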